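/- Let W be as in the context. Then for every t ∈ (0,T) and every x ∈ H with ⟨α,x⟩ = 0, the superdifferential of W at (t,x) is exactly D^{1,+}W(t,x) = { ( (1/2)⟨β,α⟩² G(t)² , γ G(t) α ) : γ ∈ [−1,1] }. -/

import Mathlib

open scoped InnerProductSpace

/-- `G(t) = ∫_t^T e^{λ(s−t)} ds`. -/
noncomputable def Gfun (T lam : ℝ) (t : ℝ) : ℝ := ∫ s in t..T, Real.exp (lam * (s - t))

/-- The glued candidate value function of the example of Section 3.1:
`W(t,x) = −G(t)|⟨α,x⟩| − ∫_t^T (1/2)⟨β,α⟩² G(s)² ds`. -/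
noncomputable def Wfun {H : Type*} [NormedAddCommGroup H] [InnerProductSpace ℝ H]
    (T lam : ℝ) (α β : H) (t : ℝ) (x : H) : ℝ :=
  -(Gfun T lam t * |⟪α, x⟫_ℝ|) - ∫ s in t..T, (1 / 2) * ⟪β, α⟫_ℝ ^ 2 * (Gfun T lam s) ^ 2

/-- The superdifferential `D^{1,+}v(t,x)` of a function `v : (0,T) × H → ℝ` at `(t,x)`:
pairs `(a,p) ∈ ℝ × H` such that
`v(s,y) − v(t,x) − ⟨p, y−x⟩ − a(s−t) ≤ o(‖y−x‖ + |s−t|)` as `(s,y) → (t,x)`. -/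
def superDiff {H : Type*} [NormedAddCommGroup H] [InnerProductSpace ℝ H]
    (T : ℝ) (v : ℝ → H → ℝ) (t : ℝ) (x : H) : Set (ℝ × H) :=
  { ap : ℝ × H | ∀ δ > (0 : ℝ), ∃ η > (0 : ℝ), ∀ s ∈ Set.Ioo (0 : ℝ) T, ∀ y : H,
      |s - t| < η → ‖y - x‖ < η →
        v s y - v t x - ⟪ap.2, y - x⟫_ℝ - ap.1 * (s - t) ≤ δ * (‖y - x‖ + |s - t|) }

/-! At a point of the hyperplane `⟨α, x⟩ = 0`, `W` is the sum of `-G(s) |⟨α, y⟩|`, whose kink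
contributes exactly the vectors `γ G(t) α` with `|γ| ≤ 1`, and of a `C¹` function of time with
derivative `½ ⟨β, α⟩² G(t)²`; superdifferentials add, which gives `⊇`. Conversely, a superdifferential
`(q, p)` bounds every one-sided directional derivative of `W` from above. The time directions `±1`
pin down `q`, and the space directions `±z` give `|⟨p, z⟩| ≤ G(t) |⟨α, z⟩|`, which forces
`p ∈ (α^⊥)^⊥ = ℝ α` with the coefficient bounded by `G(t)`. -/

open Filter Topology Set

section InnerProductSpace

variable {H : Type*} [NormedAddCommGroup H] [InnerProductSpace ℝ H]

theorem exists_mem_Icc_eq_smul_of_abs_inner_le {α p : H} {C : ℝ} (hα : α ≠ 0) (hC : 0 < C)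
    (h : ∀ z, |⟪p, z⟫_ℝ| ≤ C * |⟪α, z⟫_ℝ|) : ∃ γ ∈ Icc (-1 : ℝ) 1, p = (γ * C) • α := by
  have hp : p ∈ (ℝ ∙ α)ᗮᗮ := fun z hz => by
    rw [Submodule.mem_orthogonal_singleton_iff_inner_right] at hz
    simpa [hz, real_inner_comm] using h z
  rw [Submodule.orthogonal_orthogonal, Submodule.mem_span_singleton] at hp
  obtain ⟨k, rfl⟩ := hp
  have hk : |k| * ‖α‖ ^ 2 ≤ C * ‖α‖ ^ 2 := by
    simpa [real_inner_smul_left, real_inner_self_eq_norm_sq, abs_mul] using h α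
  have hk : |k| ≤ C := le_of_mul_le_mul_right hk (by positivity)
  refine ⟨k / C, abs_le.mp ?_, by rw [div_mul_cancel₀ k hC.ne']⟩
  rwa [abs_div, abs_of_pos hC, div_le_one hC]

theorem add_mem_superDiff {T t : ℝ} {v w : ℝ → H → ℝ} {x : H} {a b : ℝ × H}
    (ha : a ∈ superDiff T v t x) (hb : b ∈ superDiff T w t x) :
    a + b ∈ superDiff T (fun s y => v s y + w s y) t x := by
  intro δ hδ
  obtain ⟨η₁, hη₁, h₁⟩ := ha (δ / 2) (half_pos hδ)
  obtain ⟨η₂, hη₂, h₂⟩ := hb (δ / 2) (half_pos hδ)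
  refine ⟨min η₁ η₂, lt_min hη₁ hη₂, fun s hs y hst hyx => ?_⟩
  have e₁ := h₁ s hs y (hst.trans_le (min_le_left _ _)) (hyx.trans_le (min_le_left _ _))
  have e₂ := h₂ s hs y (hst.trans_le (min_le_right _ _)) (hyx.trans_le (min_le_right _ _))
  simp only [Prod.fst_add, Prod.snd_add, inner_add_left]
  linarith

theorem mem_superDiff_of_hasDerivAt {T t d : ℝ} {f : ℝ → ℝ} (hf : HasDerivAt f d t) (x : H) :
    (d, (0 : H)) ∈ superDiff T (fun s _ => f s) t x := by
  intro δ hδ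
  obtain ⟨η, hη, hf⟩ := Metric.eventually_nhds_iff.mp ((hasDerivAt_iff_isLittleO.mp hf).def hδ)
  refine ⟨η, hη, fun s _ y hst _ => ?_⟩
  have hs : |f s - f t - (s - t) * d| ≤ δ * |s - t| := hf (by rwa [Real.dist_eq])
  simp only [inner_zero_left]
  nlinarith [le_abs_self (f s - f t - (s - t) * d), norm_nonneg (y - x)]

theorem le_of_mem_superDiff_of_hasDerivWithinAt {T t q D τ : ℝ} {v : ℝ → H → ℝ} {x p z : H}
    (h : (q, p) ∈ superDiff T v t x) (ht : t ∈ Ioo 0 T)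
    (hD : HasDerivWithinAt (fun r => v (t + r * τ) (x + r • z)) D (Ioi (0 : ℝ)) 0) :
    D ≤ ⟪p, z⟫_ℝ + q * τ := by
  refine le_of_forall_pos_le_add fun ε hε => ?_
  obtain ⟨η, hη, hsup⟩ := h (ε / (‖z‖ + |τ| + 1)) (by positivity)
  have hφ : Tendsto (fun r : ℝ => (t + r * τ, x + r • z)) (𝓝 0) (𝓝 (t, x)) := by
    have : Continuous fun r : ℝ => (t + r * τ, x + r • z) := by fun_prop
    simpa using this.tendsto 0
  have hU : (Ioo 0 T ∩ Metric.ball t η) ×ˢ Metric.ball x η ∈ 𝓝 (t, x) :=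
    prod_mem_nhds (inter_mem (Ioo_mem_nhds ht.1 ht.2) (Metric.ball_mem_nhds t hη))
      (Metric.ball_mem_nhds x hη)
  refine le_of_tendsto ((hasDerivWithinAt_iff_tendsto_slope' self_notMem_Ioi).mp hD) ?_
  filter_upwards [nhdsWithin_le_nhds (hφ hU), self_mem_nhdsWithin] with r ⟨⟨hs, hst⟩, hyx⟩ hr
  have hr : 0 < r := hr
  have := hsup (t + r * τ) hs (x + r • z) (by simpa [Real.dist_eq] using hst)
    (by simpa [dist_eq_norm] using hyx)
  simp only [add_sub_cancel_left, inner_smul_right, norm_smul, abs_mul, Real.norm_eq_abs,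
    abs_of_pos hr] at this
  rw [slope_def_field, div_le_iff₀ (by simpa using hr)]
  simp only [zero_mul, add_zero, zero_smul, sub_zero]
  have hK : ε / (‖z‖ + |τ| + 1) * (r * ‖z‖ + r * |τ|) ≤ ε * r := by
    rw [div_mul_eq_mul_div, div_le_iff₀ (by positivity)]
    nlinarith [norm_nonneg z, abs_nonneg τ]
  nlinarith

theorem mem_superDiff_neg_mul_abs_inner {T t γ : ℝ} {g : ℝ → ℝ} {α x : H}
    (hg : ContinuousAt g t) (hgt : 0 ≤ g t) (hγ : γ ∈ Icc (-1 : ℝ) 1) (hx : ⟪α, x⟫_ℝ = 0) :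
    ((0 : ℝ), (γ * g t) • α) ∈ superDiff T (fun s y => -(g s * |⟪α, y⟫_ℝ|)) t x := by
  intro δ hδ
  obtain ⟨η, hη, hg⟩ := Metric.continuousAt_iff.mp hg (δ / (‖α‖ + 1)) (by positivity)
  refine ⟨η, hη, fun s _ y hst _ => ?_⟩
  have hgs : |g s - g t| < δ / (‖α‖ + 1) := by
    simpa [Real.dist_eq] using hg (by rwa [Real.dist_eq])
  have hay : ⟪α, y⟫_ℝ = ⟪α, y - x⟫_ℝ := by rw [inner_sub_right, hx, sub_zero]
  set a := ⟪α, y - x⟫_ℝ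
  have ha : |a| ≤ ‖α‖ * ‖y - x‖ := abs_real_inner_le_norm _ _
  have hγa : -(γ * a) ≤ |a| := (neg_le_abs _).trans <| by
    rw [abs_mul]; exact mul_le_of_le_one_left (abs_nonneg a) (abs_le.mpr hγ)
  dsimp only
  rw [hay, hx, real_inner_smul_left, abs_zero, mul_zero, neg_zero, sub_zero, zero_mul, sub_zero]
  calc -(g s * |a|) - γ * g t * a
      ≤ (g t - g s) * |a| := by linarith [mul_le_mul_of_nonneg_left hγa hgt]
    _ ≤ δ / (‖α‖ + 1) * (‖α‖ * ‖y - x‖) :=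
        mul_le_mul (le_of_abs_le (abs_sub_comm (g s) (g t) ▸ hgs.le)) ha (abs_nonneg a)
          (by positivity)
    _ = δ * (‖α‖ / (‖α‖ + 1)) * ‖y - x‖ := by ring
    _ ≤ δ * 1 * ‖y - x‖ := by gcongr; exact (div_le_one (by positivity)).mpr (by linarith)
    _ ≤ δ * (‖y - x‖ + |s - t|) := by nlinarith [abs_nonneg (s - t)]

end InnerProductSpace

theorem Gfun_eq_integral_exp_mul (T lam t : ℝ) :
    Gfun T lam t = ∫ u in (0 : ℝ)..T - t, Real.exp (lam * u) := by
  rw [Gfun, intervalIntegral.integral_comp_sub_right (fun u => Real.exp (lam * u)), sub_self]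

theorem Gfun_continuous (T lam : ℝ) : Continuous (Gfun T lam) := by
  simp only [funext (Gfun_eq_integral_exp_mul T lam)]
  exact (intervalIntegral.continuous_primitive
    (fun a b => (by fun_prop : Continuous fun u => Real.exp (lam * u)).intervalIntegrable a b)
    0).comp (continuous_const.sub continuous_id)

theorem Gfun_pos {T t : ℝ} (lam : ℝ) (ht : t < T) : 0 < Gfun T lam t :=
  intervalIntegral.intervalIntegral_pos_of_pos_on
    ((by fun_prop : Continuous fun s => Real.exp (lam * (s - t))).intervalIntegrable _ _)
    (fun _ _ => Real.exp_pos _) ht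

section Wfun

variable {H : Type*} [NormedAddCommGroup H] [InnerProductSpace ℝ H]

theorem Wfun_eq_add (T lam : ℝ) (α β : H) :
    Wfun T lam α β = fun s y => -(Gfun T lam s * |⟪α, y⟫_ℝ|) +
      -∫ u in s..T, (1 / 2) * ⟪β, α⟫_ℝ ^ 2 * Gfun T lam u ^ 2 := by
  funext s y
  exact sub_eq_add_neg _ _

theorem hasDerivAt_neg_integral_Gfun_sq (T lam t : ℝ) (α β : H) :
    HasDerivAt (fun s => -∫ u in s..T, (1 / 2) * ⟪β, α⟫_ℝ ^ 2 * Gfun T lam u ^ 2)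
      ((1 / 2) * ⟪β, α⟫_ℝ ^ 2 * Gfun T lam t ^ 2) t := by
  have hc : Continuous fun u => (1 / 2) * ⟪β, α⟫_ℝ ^ 2 * Gfun T lam u ^ 2 :=
    continuous_const.mul ((Gfun_continuous T lam).pow 2)
  simpa only [neg_neg] using
    (intervalIntegral.integral_hasDerivAt_left (hc.intervalIntegrable _ _)
      (hc.stronglyMeasurableAtFilter _ _) hc.continuousAt).fun_neg

theorem hasDerivAt_Wfun_time {T lam t : ℝ} {α x : H} (β : H) (hx : ⟪α, x⟫_ℝ = 0) (τ : ℝ) :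
    HasDerivAt (fun r => Wfun T lam α β (t + r * τ) (x + r • (0 : H)))
      ((1 / 2) * ⟪β, α⟫_ℝ ^ 2 * Gfun T lam t ^ 2 * τ) 0 := by
  have hline : HasDerivAt (fun r : ℝ => t + r * τ) τ 0 := by
    simpa using ((hasDerivAt_id (0 : ℝ)).mul_const τ).const_add t
  have hW := (hasDerivAt_neg_integral_Gfun_sq T lam t α β).comp_of_eq (0 : ℝ) hline (by simp)
  refine hW.congr_of_eventuallyEq (.of_forall fun r => ?_)
  simp [Wfun, hx, sub_eq_add_neg]

theorem hasDerivWithinAt_Wfun_space {T lam t : ℝ} {α x : H} (β : H) (hx : ⟪α, x⟫_ℝ = 0)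
    (z : H) :
    HasDerivWithinAt (fun r => Wfun T lam α β (t + r * 0) (x + r • z))
      (-(Gfun T lam t * |⟪α, z⟫_ℝ|)) (Ioi (0 : ℝ)) 0 := by
  have hlin : HasDerivAt (fun r : ℝ => -(Gfun T lam t * |⟪α, z⟫_ℝ|) * r + Wfun T lam α β t x)
      (-(Gfun T lam t * |⟪α, z⟫_ℝ|)) 0 := by
    simpa using ((hasDerivAt_id (0 : ℝ)).const_mul (-(Gfun T lam t * |⟪α, z⟫_ℝ|))).add_const
      (Wfun T lam α β t x)
  refine hlin.hasDerivWithinAt.congr (fun r (hr : 0 < r) => ?_) (by simp)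
  simp only [Wfun, mul_zero, add_zero, inner_add_right, inner_smul_right, hx, zero_add, abs_mul,
    abs_of_pos hr, abs_zero]
  ring

end Wfun

theorem superdiff_of_W_general
    {H : Type*} [NormedAddCommGroup H] [InnerProductSpace ℝ H]
    (T lam : ℝ) (α β : H) (hα : α ≠ 0)
    (t : ℝ) (ht : t ∈ Set.Ioo (0 : ℝ) T) (x : H) (hx : ⟪α, x⟫_ℝ = 0) :
    superDiff T (Wfun T lam α β) t x =
      { ap : ℝ × H | ∃ γ ∈ Set.Icc (-1 : ℝ) 1,
          ap = ((1 / 2) * ⟪β, α⟫_ℝ ^ 2 * (Gfun T lam t) ^ 2, (γ * Gfun T lam t) • α) } := by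
  have hG : 0 < Gfun T lam t := Gfun_pos lam ht.2
  ext ⟨q, p⟩
  constructor
  · intro h
    have hq : q = (1 / 2) * ⟪β, α⟫_ℝ ^ 2 * Gfun T lam t ^ 2 := by
      have h₁ := le_of_mem_superDiff_of_hasDerivWithinAt h ht
        (hasDerivAt_Wfun_time β hx 1).hasDerivWithinAt
      have h₂ := le_of_mem_superDiff_of_hasDerivWithinAt h ht
        (hasDerivAt_Wfun_time β hx (-1)).hasDerivWithinAt
      simp only [mul_one, mul_neg, inner_zero_right, zero_add] at h₁ h₂
      linarith
    have hp : ∀ z, |⟪p, z⟫_ℝ| ≤ Gfun T lam t * |⟪α, z⟫_ℝ| := fun z => by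
      have h₁ := le_of_mem_superDiff_of_hasDerivWithinAt h ht
        (hasDerivWithinAt_Wfun_space β hx z)
      have h₂ := le_of_mem_superDiff_of_hasDerivWithinAt h ht
        (hasDerivWithinAt_Wfun_space β hx (-z))
      simp only [inner_neg_right, abs_neg, mul_zero, add_zero] at h₁ h₂
      exact abs_le.mpr ⟨by linarith, by linarith⟩
    obtain ⟨γ, hγ, rfl⟩ := exists_mem_Icc_eq_smul_of_abs_inner_le hα hG hp
    exact ⟨γ, hγ, by rw [hq]⟩
  · rintro ⟨γ, hγ, hqp⟩
    rw [hqp, Wfun_eq_add]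
    simpa using add_mem_superDiff
      (mem_superDiff_neg_mul_abs_inner (Gfun_continuous T lam).continuousAt hG.le hγ hx)
      (mem_superDiff_of_hasDerivAt (hasDerivAt_neg_integral_Gfun_sq T lam t α β) x)

/-- On the hyperplane `⟨α,x⟩ = 0`, the superdifferential of `W` at `(t,x)` is exactly
`{ ((1/2)⟨β,α⟩² G(t)², γ G(t) α ) : γ ∈ [−1,1] }`. -/
theorem superdiff_of_W
    {H : Type*} [NormedAddCommGroup H] [InnerProductSpace ℝ H] [CompleteSpace H]
    [TopologicalSpace.SeparableSpace H]
    (T lam : ℝ) (hT : 0 < T) (α β : H) (hα : α ≠ 0)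
    (t : ℝ) (ht : t ∈ Set.Ioo (0 : ℝ) T) (x : H) (hx : ⟪α, x⟫_ℝ = 0) :
    superDiff T (Wfun T lam α β) t x =
      { ap : ℝ × H | ∃ γ ∈ Set.Icc (-1 : ℝ) 1,
          ap = ((1 / 2) * ⟪β, α⟫_ℝ ^ 2 * (Gfun T lam t) ^ 2, (γ * Gfun T lam t) • α) } :=
  superdiff_of_W_general T lam α β hα t ht x hx
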